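/- arXiv:1211.3649 — 7 statements merged into one kernel-verified Lean document; each statement's English description precedes it below -/
import Mathlib

section
/- The map sending a 2×2 matrix [[a,b],[c,d]] with entries in GF(q) and determinant ad+bc=1 (q even, so ad-bc=ad+bc) to the 4×4 matrix [[a^2,0,σab,b^2],[ac,1,σbc,bd],[0,0,1,0],[c^2,0,σcd,d^2]] is an injective group homomorphism from SL(2,q) into GL(4,q). -/
/-!
Multiplicativity is a direct entrywise computation: the cross terms `2xy` produced by squaring
sums vanish in characteristic 2, and the determinant conditions `ad - bc = 1`, `AD - BC = 1`
absorb the remaining mixed terms. The corner entries of `phiMat σ a b c d` are `a², b², c², d²`,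
so injectivity follows from injectivity of the Frobenius map on a reduced ring.
-/

/-- The 4×4 matrix associated to a 2×2 matrix `[[a,b],[c,d]]`. -/
def phiMat {F : Type*} [CommRing F] (σ a b c d : F) : Matrix (Fin 4) (Fin 4) F :=
  !![a^2, 0, σ*a*b, b^2;
     a*c, 1, σ*b*c, b*d;
     0,   0, 1,     0;
     c^2, 0, σ*c*d, d^2]

open Matrix

variable {R : Type*} [CommRing R]

lemma phiMat_one (σ : R) : phiMat σ 1 0 0 1 = 1 := by
  ext i j
  fin_cases i <;> fin_cases j <;> simp [phiMat, one_apply]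

lemma phiMat_mul [CharP R 2] (σ a b c d A B C D : R)
    (h1 : a * d - b * c = 1) (hB : A * D - B * C = 1) :
    phiMat σ a b c d * phiMat σ A B C D =
      phiMat σ (a*A + b*C) (a*B + b*D) (c*A + d*C) (c*B + d*D) := by
  have h2 : (2 : R) = 0 := CharTwo.two_eq_zero
  ext i j
  fin_cases i <;> fin_cases j <;>
    simp [phiMat, mul_apply, Fin.sum_univ_four]
  · linear_combination (-(a*b*A*C)) * h2
  · linear_combination (-(a*b*σ)) * hB + (-(a*b*B*C*σ)) * h2
  · linear_combination (-(a*b*B*D)) * h2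
  · linear_combination (-(A*C)) * h1 + (-(b*c*A*C)) * h2
  · linear_combination (-(B*C*σ)) * h1 + (-(b*c*σ)) * hB + (-(b*c*B*C*σ)) * h2
  · linear_combination (-(B*D)) * h1 + (-(b*c*B*D)) * h2
  · linear_combination (-(c*d*A*C)) * h2
  · linear_combination (-(c*d*σ)) * hB + (-(c*d*B*C*σ)) * h2
  · linear_combination (-(c*d*B*D)) * h2

lemma phiMat_inj [IsReduced R] [CharP R 2] {σ a b c d a' b' c' d' : R}
    (h : phiMat σ a b c d = phiMat σ a' b' c' d') : a = a' ∧ b = b' ∧ c = c' ∧ d = d' := by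
  have sq_inj : ∀ {x y : R}, x ^ 2 = y ^ 2 → x = y := fun hxy => frobenius_inj R 2 hxy
  have entry := fun i j => congrFun (congrFun h i) j
  exact ⟨sq_inj (by simpa [phiMat] using entry 0 0), sq_inj (by simpa [phiMat] using entry 0 3),
    sq_inj (by simpa [phiMat] using entry 3 0), sq_inj (by simpa [phiMat] using entry 3 3)⟩

def phiHom [CharP R 2] (σ : R) : Matrix.SpecialLinearGroup (Fin 2) R →* Matrix (Fin 4) (Fin 4) R where
  toFun M := phiMat σ (M 0 0) (M 0 1) (M 1 0) (M 1 1)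
  map_one' := by simpa using phiMat_one σ
  map_mul' M N := by
    simp only [Matrix.SpecialLinearGroup.coe_mul, mul_apply, Fin.sum_univ_two]
    exact (phiMat_mul σ _ _ _ _ _ _ _ _ (det_fin_two M.1 ▸ M.2) (det_fin_two N.1 ▸ N.2)).symm

lemma phiHom_injective [IsReduced R] [CharP R 2] (σ : R) : Function.Injective (phiHom σ) := by
  intro M N h
  obtain ⟨h00, h01, h10, h11⟩ := phiMat_inj h
  refine Matrix.SpecialLinearGroup.ext M N fun i j => ?_
  fin_cases i <;> fin_cases j <;> assumption

theorem stmt0_general (F : Type) [Field F]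
    (hchar : ringChar F = 2) (σ : F) :
    ∃ f : Matrix.SpecialLinearGroup (Fin 2) F →* Matrix.GeneralLinearGroup (Fin 4) F,
      Function.Injective f ∧
      ∀ M : Matrix.SpecialLinearGroup (Fin 2) F,
        ((f M : Matrix (Fin 4) (Fin 4) F)) =
          phiMat σ ((M : Matrix (Fin 2) (Fin 2) F) 0 0) ((M : Matrix (Fin 2) (Fin 2) F) 0 1)
            ((M : Matrix (Fin 2) (Fin 2) F) 1 0) ((M : Matrix (Fin 2) (Fin 2) F) 1 1) := by
  have : CharP F 2 := ringChar.eq_iff.mp hchar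
  exact ⟨(phiHom σ).toHomUnits,
    fun M N h => phiHom_injective σ (congrArg Units.val h), fun _ => rfl⟩

theorem stmt0 (q : ℕ) (F : Type) [Field F] [Fintype F]
    (hq : Fintype.card F = q) (hchar : ringChar F = 2) (σ : F) :
    ∃ f : Matrix.SpecialLinearGroup (Fin 2) F →* Matrix.GeneralLinearGroup (Fin 4) F,
      Function.Injective f ∧
      ∀ M : Matrix.SpecialLinearGroup (Fin 2) F,
        ((f M : Matrix (Fin 4) (Fin 4) F)) =
          phiMat σ ((M : Matrix (Fin 2) (Fin 2) F) 0 0) ((M : Matrix (Fin 2) (Fin 2) F) 0 1)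
            ((M : Matrix (Fin 2) (Fin 2) F) 1 0) ((M : Matrix (Fin 2) (Fin 2) F) 1 1) :=
  stmt0_general F hchar σ
end

section
/- The group G = {[[a^2,0,σab,b^2],[ac,1,σbc,bd],[0,0,1,0],[c^2,0,σcd,d^2]] : a,b,c,d ∈ GF(q), ad+bc=1} acts transitively on the q+1 points of the conic C = {(0:0:0:1)} ∪ {(1:s:0:s^2) : s ∈ GF(q)} and fixes the nucleus N=(0:1:0:0). -/
def conicSet (F : Type*) [Field F] : Set (Fin 4 → F) :=
  {v | v = ![0, 0, 0, 1] ∨ ∃ s : F, v = ![1, s, 0, s^2]}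

open Matrix

def conicPoint {F : Type*} [CommRing F] (x y : F) : Fin 4 → F := ![x ^ 2, x * y, 0, y ^ 2]

theorem conicPoint_zero_one {F : Type*} [CommRing F] :
    conicPoint (0 : F) 1 = ![0, 0, 0, 1] := by
  simp [conicPoint]

theorem conicPoint_one {F : Type*} [CommRing F] (s : F) :
    conicPoint 1 s = ![1, s, 0, s ^ 2] := by
  simp [conicPoint]

theorem phiMat_mulVec_nucleus {F : Type*} [CommRing F] (σ a b c d : F) :
    phiMat σ a b c d *ᵥ ![0, 1, 0, 0] = ![0, 1, 0, 0] := by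
  ext i
  fin_cases i <;> simp [phiMat, mulVec, dotProduct, Fin.sum_univ_four]

theorem phiMat_mulVec_conicPoint {F : Type*} [CommRing F] [CharP F 2] (σ : F) {a b c d : F}
    (h : a * d + b * c = 1) (x y : F) :
    phiMat σ a b c d *ᵥ conicPoint x y = conicPoint (a * x + b * y) (c * x + d * y) := by
  ext i
  fin_cases i <;> simp [phiMat, conicPoint, mulVec, dotProduct, Fin.sum_univ_four,
    CharTwo.add_sq, mul_pow]
  linear_combination (-x * y) * h

theorem exists_phiMat_mulVec_eq {F : Type*} [Field F] [CharP F 2] (σ : F) {u v : Fin 4 → F}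
    (hu : u ∈ conicSet F) (hv : v ∈ conicSet F) :
    ∃ a b c d : F, a * d + b * c = 1 ∧ phiMat σ a b c d *ᵥ u = v := by
  have map : ∀ {x y x' y' a b c d : F}, a * d + b * c = 1 → a * x + b * y = x' →
      c * x + d * y = y' → phiMat σ a b c d *ᵥ conicPoint x y = conicPoint x' y' := by
    rintro x y x' y' a b c d h rfl rfl
    exact phiMat_mulVec_conicPoint σ h x y
  rcases hu with rfl | ⟨s, rfl⟩ <;> rcases hv with rfl | ⟨t, rfl⟩ <;>
    simp only [← conicPoint_zero_one, ← conicPoint_one]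
  · exact ⟨1, 0, 0, 1, by ring, map (by ring) (by ring) (by ring)⟩
  · exact ⟨0, 1, 1, t, by ring, map (by ring) (by ring) (by ring)⟩
  · exact ⟨-s, 1, 1, 0, by ring, map (by ring) (by ring) (by ring)⟩
  · exact ⟨1, 0, t - s, 1, by ring, map (by ring) (by ring) (by ring)⟩

theorem stmt4_general (F : Type) [Field F] (hchar : ringChar F = 2) (σ : F) :
    (∀ a b c d : F, a*d + b*c = 1 →
      ∃ lam : F, lam ≠ 0 ∧
        (phiMat σ a b c d).mulVec ![0, 1, 0, 0] = lam • ![0, 1, 0, 0]) ∧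
    (∀ u v : Fin 4 → F, u ∈ conicSet F → v ∈ conicSet F →
      ∃ a b c d : F, a*d + b*c = 1 ∧
        ∃ lam : F, lam ≠ 0 ∧ (phiMat σ a b c d).mulVec u = lam • v) := by
  have : CharP F 2 := ringChar.eq_iff.mp hchar
  refine ⟨fun a b c d _ => ⟨1, one_ne_zero, ?_⟩, fun u v hu hv => ?_⟩
  · rw [one_smul, phiMat_mulVec_nucleus]
  · obtain ⟨a, b, c, d, hdet, hmap⟩ := exists_phiMat_mulVec_eq σ hu hv
    exact ⟨a, b, c, d, hdet, 1, one_ne_zero, by rw [one_smul, hmap]⟩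

theorem stmt4 (F : Type) [Field F] [Fintype F] (hchar : ringChar F = 2) (σ : F)
    (hirr : Irreducible (Polynomial.X^2 + Polynomial.C σ * Polynomial.X + 1 : Polynomial F)) :
    (∀ a b c d : F, a*d + b*c = 1 →
      ∃ lam : F, lam ≠ 0 ∧
        (phiMat σ a b c d).mulVec ![0, 1, 0, 0] = lam • ![0, 1, 0, 0]) ∧
    (∀ u v : Fin 4 → F, u ∈ conicSet F → v ∈ conicSet F →
      ∃ a b c d : F, a*d + b*c = 1 ∧
        ∃ lam : F, lam ≠ 0 ∧ (phiMat σ a b c d).mulVec u = lam • v) :=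
  stmt4_general F hchar σ
end

section
/- The stabilizer in G of the point (1:0:0:0) consists exactly of the matrices [[a^2,0,σab,b^2],[0,1,0,bd],[0,0,1,0],[0,0,0,d^2]] with a,b,d ∈ GF(q) and ad=1, i.e., the images of upper triangular matrices in SL(2,q). -/
section

variable {F : Type*} [CommRing F] (σ a b c d : F)

theorem phiMat_mulVec_single_zero :
    (phiMat σ a b c d).mulVec ![1, 0, 0, 0] = ![a^2, a*c, 0, c^2] := by
  ext i
  fin_cases i <;> simp [phiMat, Matrix.mulVec, dotProduct, Fin.sum_univ_four]

theorem phiMat_zero_c :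
    phiMat σ a b 0 d =
      !![a^2, 0, σ*a*b, b^2;
         0,   1, 0,     b*d;
         0,   0, 1,     0;
         0,   0, 0,     d^2] := by
  simp [phiMat]

theorem phiMat_fixes_point_iff [IsReduced F] :
    (∃ lam : F, lam ≠ 0 ∧
        (phiMat σ a b c d).mulVec ![1, 0, 0, 0] = lam • ![1, 0, 0, 0]) ↔
      c = 0 ∧ a ≠ 0 := by
  simp only [phiMat_mulVec_single_zero]
  constructor
  · rintro ⟨lam, hlam, hv⟩
    have ha : a^2 = lam := by simpa using congrFun hv 0
    have hc : c^2 = 0 := by simpa using congrFun hv 3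
    exact ⟨(isNilpotent_iff_eq_zero.mp ⟨2, hc⟩), fun h => hlam (by simp [← ha, h])⟩
  · rintro ⟨rfl, ha⟩
    refine ⟨a^2, pow_ne_zero_iff two_ne_zero |>.mpr ha, ?_⟩
    ext i
    fin_cases i <;> simp

end

theorem stmt5_general (F : Type) [Field F] (σ : F)
    (a b c d : F) (habcd : a*d + b*c = 1) :
    (∃ lam : F, lam ≠ 0 ∧
        (phiMat σ a b c d).mulVec ![1, 0, 0, 0] = lam • ![1, 0, 0, 0]) ↔
      (c = 0 ∧ a * d = 1 ∧
        phiMat σ a b c d =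
          !![a^2, 0, σ*a*b, b^2;
             0,   1, 0,     b*d;
             0,   0, 1,     0;
             0,   0, 0,     d^2]) := by
  rw [phiMat_fixes_point_iff]
  constructor
  · rintro ⟨rfl, -⟩
    exact ⟨rfl, by simpa using habcd, phiMat_zero_c σ a b d⟩
  · rintro ⟨rfl, had, -⟩
    exact ⟨rfl, left_ne_zero_of_mul_eq_one had⟩

theorem stmt5 (F : Type) [Field F] [Fintype F] (hchar : ringChar F = 2) (σ : F)
    (a b c d : F) (habcd : a*d + b*c = 1) :
    (∃ lam : F, lam ≠ 0 ∧
        (phiMat σ a b c d).mulVec ![1, 0, 0, 0] = lam • ![1, 0, 0, 0]) ↔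
      (c = 0 ∧ a * d = 1 ∧
        phiMat σ a b c d =
          !![a^2, 0, σ*a*b, b^2;
             0,   1, 0,     b*d;
             0,   0, 1,     0;
             0,   0, 0,     d^2]) :=
  stmt5_general F σ a b c d habcd
end

section
/- The only element of G mapping the point (0:0:1:0) into the line {X1=0, X0=X3} of PG(3,q) and fixing the point (1:0:1:1) is the identity matrix. -/
open Polynomial

theorem ne_zero_of_irreducible_X_sq_add_C_mul_X_add_one {F : Type*} [Field F] [CharP F 2]
    {σ : F} (hirr : Irreducible (X^2 + C σ * X + 1 : F[X])) : σ ≠ 0 := by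
  rintro rfl
  have hroot : (X^2 + C (0 : F) * X + 1 : F[X]).IsRoot 1 := by
    simp [CharTwo.add_self_eq_zero]
  have hdeg := degree_eq_one_of_irreducible_of_root hirr hroot
  have hdeg2 : (X^2 + C (0 : F) * X + 1 : F[X]).degree = 2 := by compute_degree!
  rw [hdeg2] at hdeg
  exact absurd hdeg (by decide)

section phiMat

variable {F : Type*} [CommRing F] (σ a b c d : F)

theorem phiMat_mulVec_e2 :
    (phiMat σ a b c d).mulVec ![0, 0, 1, 0] = ![σ*a*b, σ*b*c, 1, σ*c*d] := by
  ext i; fin_cases i <;> simp [phiMat, Matrix.mulVec, dotProduct, Fin.sum_univ_four]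

theorem phiMat_mulVec_unit_point :
    (phiMat σ a b c d).mulVec ![1, 0, 1, 1] =
      ![a^2 + σ*a*b + b^2, a*c + σ*b*c + b*d, 1, c^2 + σ*c*d + d^2] := by
  ext i; fin_cases i <;> simp [phiMat, Matrix.mulVec, dotProduct, Fin.sum_univ_four]

theorem phiMat_diagonal_eq_one {a d : F} (ha : a^2 = 1) (hd : d^2 = 1) :
    phiMat σ a 0 0 d = 1 := by
  ext i j
  fin_cases i <;> fin_cases j <;> simp [phiMat, ha, hd]

end phiMat

theorem off_diagonal_eq_zero_of_ad_add_bc_eq_one {F : Type*} [Field F] {σ a b c d : F}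
    (hσ : σ ≠ 0) (habcd : a*d + b*c = 1) (hbc : σ*b*c = 0) (hline : σ*a*b = σ*c*d) :
    b = 0 ∧ c = 0 := by
  rcases mul_eq_zero.mp hbc with hσb | hc
  · have hb := (mul_eq_zero.mp hσb).resolve_left hσ
    subst hb
    have hd : d ≠ 0 := right_ne_zero_of_mul_eq_one (by simpa using habcd)
    refine ⟨rfl, ?_⟩
    simpa [hσ, hd] using hline.symm
  · subst hc
    have ha : a ≠ 0 := left_ne_zero_of_mul_eq_one (by simpa using habcd)
    refine ⟨?_, rfl⟩
    simpa [hσ, ha] using hline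

theorem stmt6_general (F : Type) [Field F] (hchar : ringChar F = 2) (σ : F)
    (hirr : Irreducible (Polynomial.X^2 + Polynomial.C σ * Polynomial.X + 1 : Polynomial F))
    (a b c d : F) (habcd : a*d + b*c = 1)
    (hline1 : (phiMat σ a b c d).mulVec ![0, 0, 1, 0] 1 = 0)
    (hline2 : (phiMat σ a b c d).mulVec ![0, 0, 1, 0] 0 =
              (phiMat σ a b c d).mulVec ![0, 0, 1, 0] 3)
    (hfix : ∃ lam : F, lam ≠ 0 ∧
      (phiMat σ a b c d).mulVec ![1, 0, 1, 1] = lam • ![1, 0, 1, 1]) :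
    phiMat σ a b c d = 1 := by
  have : CharP F 2 := ringChar.of_eq hchar
  have hσ := ne_zero_of_irreducible_X_sq_add_C_mul_X_add_one hirr
  simp only [phiMat_mulVec_e2] at hline1 hline2
  obtain ⟨hb, hc⟩ := off_diagonal_eq_zero_of_ad_add_bc_eq_one hσ habcd hline1 hline2
  subst hb hc
  obtain ⟨lam, -, hfix⟩ := hfix
  have hrow0 : a^2 = lam := by simpa [phiMat_mulVec_unit_point] using congrFun hfix 0
  have hrow2 : 1 = lam := by simpa [phiMat_mulVec_unit_point] using congrFun hfix 2
  have ha : a^2 = 1 := by rw [hrow0, ← hrow2]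
  have hd : d^2 = 1 := by linear_combination -(d^2) * ha + (a*d + 1) * habcd
  exact phiMat_diagonal_eq_one σ ha hd

theorem stmt6 (F : Type) [Field F] [Fintype F] (hchar : ringChar F = 2) (σ : F)
    (hirr : Irreducible (Polynomial.X^2 + Polynomial.C σ * Polynomial.X + 1 : Polynomial F))
    (a b c d : F) (habcd : a*d + b*c = 1)
    (hline1 : (phiMat σ a b c d).mulVec ![0, 0, 1, 0] 1 = 0)
    (hline2 : (phiMat σ a b c d).mulVec ![0, 0, 1, 0] 0 =
              (phiMat σ a b c d).mulVec ![0, 0, 1, 0] 3)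
    (hfix : ∃ lam : F, lam ≠ 0 ∧
      (phiMat σ a b c d).mulVec ![1, 0, 1, 1] = lam • ![1, 0, 1, 1]) :
    phiMat σ a b c d = 1 :=
  stmt6_general F hchar σ hirr a b c d habcd hline1 hline2 hfix
end

section
/- The stabilizer in G of the point R=(1:ξ:0:0) of PG(3,q^2), where ξ ∈ GF(q^2)\GF(q), is the subgroup of matrices with a=d=1, c=0 and b ∈ GF(q) arbitrary; in particular this stabilizer has order q. -/
section

open Matrix

variable {F K : Type*}

lemma phiMat_map [CommRing F] [CommRing K] (f : F →+* K) (σ a b c d : F) :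
    (phiMat σ a b c d).map f = phiMat (f σ) (f a) (f b) (f c) (f d) := by
  ext i j
  fin_cases i <;> fin_cases j <;> simp [phiMat]

lemma phiMat_mulVec [CommRing F] (σ a b c d x : F) :
    phiMat σ a b c d *ᵥ ![1, x, 0, 0] = ![a^2, a*c + x, 0, c^2] := by
  ext i
  fin_cases i <;> simp [phiMat, Matrix.mulVec, dotProduct, Fin.sum_univ_four]

lemma exists_phiMat_map_mulVec_eq_smul_iff [Field F] [CharP F 2] [CommRing K] [IsDomain K]
    [Algebra F K] {σ a b c d : F} (hdet : a*d + b*c = 1) {ξ : K} (hξ : ξ ≠ 0) :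
    (∃ lam : K, lam ≠ 0 ∧
        ((phiMat σ a b c d).map (algebraMap F K)) *ᵥ ![1, ξ, 0, 0] = lam • ![1, ξ, 0, 0]) ↔
      (a = 1 ∧ d = 1 ∧ c = 0) := by
  have hinj := (algebraMap F K).injective
  simp only [phiMat_map, phiMat_mulVec]
  constructor
  · rintro ⟨lam, -, heq⟩
    have h0 := congrFun heq 0
    have h1 := congrFun heq 1
    have h3 := congrFun heq 3
    simp only [Matrix.cons_val, Matrix.smul_cons, smul_eq_mul, mul_one, mul_zero] at h0 h1 h3
    have hc : c = 0 := pow_eq_zero_iff two_ne_zero |>.mp <| hinj <| by simpa using h3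
    subst hc
    have hlam : lam = 1 := by simpa [hξ] using h1.symm
    have ha : a = 1 := CharTwo.sq_injective <| hinj <| by simp [h0, hlam]
    subst ha
    exact ⟨rfl, by simpa using hdet, rfl⟩
  · rintro ⟨rfl, rfl, rfl⟩
    exact ⟨1, one_ne_zero, by simp⟩

lemma card_unipotent_upper (F : Type*) [CommRing F] :
    Nat.card {g : F × F × F × F //
      g.1 * g.2.2.2 + g.2.1 * g.2.2.1 = 1 ∧ (g.1 = 1 ∧ g.2.2.2 = 1 ∧ g.2.2.1 = 0)} = Nat.card F :=
  Nat.card_congr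
    { toFun := fun g => g.1.2.1
      invFun := fun b => ⟨(1, b, 0, 1), by simp⟩
      left_inv := by
        rintro ⟨⟨a, b, c, d⟩, -, ha, hd, hc⟩
        dsimp only at ha hd hc
        subst ha hd hc
        rfl
      right_inv := fun _ => rfl }

end

theorem stmt7_general (q : ℕ) (F K : Type) [Field F] [Fintype F] [Field K] [Algebra F K]
    (hq : Fintype.card F = q) (hchar : ringChar F = 2)
    (σ : F) (ξ : K) (hξ : ξ ∉ Set.range (algebraMap F K)) :
    (∀ a b c d : F, a*d + b*c = 1 →
      ((∃ lam : K, lam ≠ 0 ∧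
          ((phiMat σ a b c d).map (algebraMap F K)).mulVec ![1, ξ, 0, 0] =
            lam • ![1, ξ, 0, 0]) ↔ (a = 1 ∧ d = 1 ∧ c = 0))) ∧
    Nat.card {g : F × F × F × F //
      g.1 * g.2.2.2 + g.2.1 * g.2.2.1 = 1 ∧
      ∃ lam : K, lam ≠ 0 ∧
        ((phiMat σ g.1 g.2.1 g.2.2.1 g.2.2.2).map (algebraMap F K)).mulVec ![1, ξ, 0, 0] =
          lam • ![1, ξ, 0, 0]} = q := by
  have := ringChar.of_eq hchar
  have hξ0 : ξ ≠ 0 := fun h => hξ ⟨0, by simp [h]⟩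
  have hstab := fun a b c d (hdet : a*d + b*c = 1) =>
    exists_phiMat_map_mulVec_eq_smul_iff (σ := σ) hdet hξ0
  refine ⟨hstab, ?_⟩
  rw [← hq, ← Nat.card_eq_fintype_card, ← card_unipotent_upper F]
  exact Nat.card_congr <| Equiv.subtypeEquivRight fun g => and_congr_right (hstab _ _ _ _)

theorem stmt7 (q : ℕ) (F K : Type) [Field F] [Fintype F] [Field K] [Fintype K] [Algebra F K]
    (hq : Fintype.card F = q) (hchar : ringChar F = 2) (hK : Fintype.card K = q^2)
    (σ : F) (ξ : K) (hξ : ξ ∉ Set.range (algebraMap F K)) :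
    (∀ a b c d : F, a*d + b*c = 1 →
      ((∃ lam : K, lam ≠ 0 ∧
          ((phiMat σ a b c d).map (algebraMap F K)).mulVec ![1, ξ, 0, 0] =
            lam • ![1, ξ, 0, 0]) ↔ (a = 1 ∧ d = 1 ∧ c = 0))) ∧
    Nat.card {g : F × F × F × F //
      g.1 * g.2.2.2 + g.2.1 * g.2.2.1 = 1 ∧
      ∃ lam : K, lam ≠ 0 ∧
        ((phiMat σ g.1 g.2.1 g.2.2.1 g.2.2.2).map (algebraMap F K)).mulVec ![1, ξ, 0, 0] =
          lam • ![1, ξ, 0, 0]} = q :=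
  stmt7_general q F K hq hchar σ ξ hξ
end

section
/- Let q be even, σ ∈ GF(q)\{0}, ξ ∈ GF(q^2)\GF(q). The polynomial x^2+σx+ξ^2 is reducible over GF(q^2) if and only if the polynomial x^2+σx+ξ^2+ξ^{2q} is reducible over GF(q). -/
/-!
Completing the square reduces both sides to equations `y² + y = c`. Over a finite field the
Artin–Schreier map `y ↦ y² + y` is additive with kernel `{0, 1}`, so its image has index two;
since the trace commutes with it and is surjective, `c` lies in the image over `K` exactly when
`Tr_{K/F} c` lies in the image over `F`. For `[K : F] = 2` this trace is `c + c^q`, and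
`c = ξ² / σ²` has trace `η / σ²`.
-/

section CharTwo

variable {R : Type*} [CommRing R] [CharP R 2]

variable (R) in
def artinSchreier : R →+ R :=
  (frobenius R 2).toAddMonoidHom + AddMonoidHom.id R

@[simp]
lemma artinSchreier_apply (y : R) : artinSchreier R y = y ^ 2 + y := rfl

lemma sq_add_self_eq_zero_iff [IsDomain R] {y : R} : y ^ 2 + y = 0 ↔ y = 0 ∨ y = 1 := by
  rw [show y ^ 2 + y = y * (y + 1) by ring, mul_eq_zero, CharTwo.add_eq_zero]

lemma exists_sq_add_mul_add_eq_zero_iff {K : Type*} [Field K] [CharP K 2] {a : K} (ha : a ≠ 0)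
    (b : K) : (∃ x, x ^ 2 + a * x + b = 0) ↔ ∃ y, y ^ 2 + y = b / a ^ 2 := by
  have key : ∀ y : K, (a * y) ^ 2 + a * (a * y) + b = a ^ 2 * (y ^ 2 + y + b / a ^ 2) := by
    intro y; field_simp
  simp only [← CharTwo.add_eq_zero (b := b / a ^ 2)]
  constructor
  · rintro ⟨x, hx⟩
    refine ⟨x / a, ?_⟩
    have := key (x / a)
    rw [mul_div_cancel₀ x ha, hx, eq_comm, mul_eq_zero] at this
    exact this.resolve_left (pow_ne_zero 2 ha)
  · rintro ⟨y, hy⟩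
    exact ⟨a * y, by rw [key, hy, mul_zero]⟩

end CharTwo

lemma index_range_artinSchreier (K : Type*) [Field K] [Finite K] [CharP K 2] :
    (artinSchreier K).range.index = 2 := by
  have hker : ((artinSchreier K).ker : Set K) = {0, 1} := by
    ext y
    simp [sq_add_self_eq_zero_iff]
  rw [AddSubgroup.index_range, ← SetLike.coe_sort_coe, hker, Nat.card_coe_set_eq, Set.ncard_pair zero_ne_one]

section FiniteField

variable (F : Type*) {K : Type*} [Field F] [Field K] [Finite K] [Algebra F K]

lemma trace_artinSchreier [CharP F 2] [CharP K 2] (y : K) :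
    Algebra.trace F K (artinSchreier K y) = artinSchreier F (Algebra.trace F K y) := by
  refine (algebraMap F K).injective ?_
  simp only [artinSchreier_apply, map_add, map_pow, FiniteField.algebraMap_trace_eq_sum_pow,
    CharTwo.sum_sq]
  simp only [pow_right_comm y 2]

lemma exists_sq_add_self_eq_iff_exists_eq_trace [Finite F] [CharP F 2] [CharP K 2] (c : K) :
    (∃ y : K, y ^ 2 + y = c) ↔ ∃ u : F, u ^ 2 + u = Algebra.trace F K c := by
  let tr : K →+ F := (Algebra.trace F K).toAddMonoidHom
  have hle : (artinSchreier K).range ≤ (artinSchreier F).range.comap tr := by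
    rintro _ ⟨y, rfl⟩
    exact ⟨Algebra.trace F K y, (trace_artinSchreier F y).symm⟩
  have heq : (artinSchreier K).range = (artinSchreier F).range.comap tr := by
    refine le_antisymm hle (AddSubgroup.relIndex_eq_one.mp ?_)
    have := AddSubgroup.relIndex_mul_index hle
    rw [AddSubgroup.index_comap_of_surjective _ (Algebra.trace_surjective F K),
      index_range_artinSchreier, index_range_artinSchreier] at this
    omega
  exact (AddSubgroup.ext_iff.mp heq c :)

lemma algebraMap_trace_eq_add_pow_card (h : Module.finrank F K = 2) (c : K) :
    algebraMap F K (Algebra.trace F K c) = c + c ^ Nat.card F := by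
  rw [FiniteField.algebraMap_trace_eq_sum_pow, h, Finset.sum_range_succ, Finset.sum_range_one,
    pow_zero, pow_one, pow_one]

end FiniteField

theorem stmt13_general (q : ℕ) (F K : Type) [Field F] [Fintype F] [Field K] [Fintype K] [Algebra F K]
    (hq : Fintype.card F = q) (hchar : ringChar F = 2) (hK : Fintype.card K = q^2)
    (σ : F) (hσ : σ ≠ 0) (ξ : K)
    (η : F) (hη : algebraMap F K η = ξ^2 + (ξ^q)^2) :
    (∃ x : K, x^2 + (algebraMap F K σ) * x + ξ^2 = 0) ↔
      (∃ x : F, x^2 + σ * x + η = 0) := by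
  have : CharP F 2 := ringChar.of_eq hchar
  have : CharP K 2 := (Algebra.charP_iff F K 2).mp ‹_›
  have hdeg : Module.finrank F K = 2 := by
    have hcard := Module.card_eq_pow_finrank (K := F) (V := K)
    rw [hK, hq] at hcard
    exact Nat.pow_right_injective (hq ▸ Fintype.one_lt_card) hcard.symm
  have htrace : Algebra.trace F K (ξ ^ 2 / algebraMap F K σ ^ 2) = η / σ ^ 2 := by
    apply (algebraMap F K).injective
    rw [algebraMap_trace_eq_add_pow_card F hdeg, Nat.card_eq_fintype_card, hq, div_pow,
      ← map_pow, ← map_pow, ← hq, FiniteField.pow_card, hq, map_div₀, hη, pow_right_comm, add_div,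
      map_pow]
  rw [exists_sq_add_mul_add_eq_zero_iff (by simpa using hσ), exists_sq_add_mul_add_eq_zero_iff hσ,
    exists_sq_add_self_eq_iff_exists_eq_trace F, htrace]

theorem stmt13 (q : ℕ) (F K : Type) [Field F] [Fintype F] [Field K] [Fintype K] [Algebra F K]
    (hq : Fintype.card F = q) (hchar : ringChar F = 2) (hK : Fintype.card K = q^2)
    (σ : F) (hσ : σ ≠ 0) (ξ : K) (hξ : ξ ∉ Set.range (algebraMap F K))
    (η : F) (hη : algebraMap F K η = ξ^2 + (ξ^q)^2) :
    (∃ x : K, x^2 + (algebraMap F K σ) * x + ξ^2 = 0) ↔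
      (∃ x : F, x^2 + σ * x + η = 0) :=
  stmt13_general q F K hq hchar hK σ hσ ξ η hη
end

section
/- Let q be even, σ ∈ GF(q)\{0}, ξ ∈ GF(q^2)\GF(q), and let s=[[1,0,0,0],[0,1,σ,0],[0,0,1,0],[0,0,0,1]] and g=[[0,0,0,1],[0,1,σ,0],[0,0,1,0],[1,0,0,0]]. Then g belongs to G (it is the image of [[0,1],[1,0]] ∈ SL(2,q), noting 0·0+1·1=1 in characteristic 2), s commutes with every element of G, and s and g agree on the point P=(ξ:0:1:ξ) of PG(3,q^2): s(P)=g(P)=(ξ:σ:1:ξ). -/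
namespace Matrix

variable {n R S : Type*} [DecidableEq n] [CommRing R]

section Fintype
variable [Fintype n]

theorem single_mul_eq_self_of_row_eq {M : Matrix n n R} {i j : n} (hM : M j = Pi.single j 1)
    (c : R) : single i j c * M = single i j c := by
  ext a b
  by_cases ha : a = i
  · subst ha
    simp [hM, Pi.single_apply, single_apply, eq_comm]
  · simp [ha, Ne.symm ha]

theorem mul_single_eq_self_of_col_eq {M : Matrix n n R} {i j : n} (hM : Mᵀ i = Pi.single i 1)
    (c : R) : M * single i j c = single i j c := by
  have := congrArg transpose (single_mul_eq_self_of_row_eq (i := j) hM c)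
  rwa [transpose_mul, transpose_transpose, transpose_single] at this

theorem commute_transvection {M : Matrix n n R} {i j : n} (hrow : M j = Pi.single j 1)
    (hcol : Mᵀ i = Pi.single i 1) (c : R) : Commute (transvection i j c) M := by
  simp only [Commute, SemiconjBy, transvection, add_mul, mul_add, one_mul, mul_one,
    single_mul_eq_self_of_row_eq hrow, mul_single_eq_self_of_col_eq hcol]

theorem transvection_mulVec (i j : n) (c : R) (v : n → R) :
    transvection i j c *ᵥ v = v + Pi.single i (c * v j) := by
  rw [transvection, add_mulVec, one_mulVec, single_mulVec]
  rfl

end Fintype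

theorem map_transvection [CommRing S] (f : R →+* S) (i j : n) (c : R) :
    (transvection i j c).map f = transvection i j (f c) := by
  simp [transvection, Matrix.map_add, map_one]

theorem map_permMatrix [CommRing S] (f : R →+* S) (p : Equiv.Perm n) :
    (p.permMatrix R).map f = p.permMatrix S := by
  ext a b
  simp [PEquiv.toMatrix_apply]

end Matrix

open Matrix

section

variable {R : Type*} [CommRing R]

theorem phiMat_row_two (σ a b c d : R) : phiMat σ a b c d 2 = Pi.single 2 1 := by
  ext k; fin_cases k <;> simp [phiMat]

theorem phiMat_col_one (σ a b c d : R) : (phiMat σ a b c d)ᵀ 1 = Pi.single 1 1 := by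
  ext k; fin_cases k <;> simp [phiMat]

theorem transvection_one_two_eq (σ : R) :
    transvection (1 : Fin 4) 2 σ = !![1,0,0,0; 0,1,σ,0; 0,0,1,0; 0,0,0,1] := by
  ext i j; fin_cases i <;> fin_cases j <;> simp [transvection]

theorem phiMat_zero_one_one_zero (σ : R) :
    phiMat σ 0 1 1 0 = !![0,0,0,1; 0,1,σ,0; 0,0,1,0; 1,0,0,0] := by
  ext i j; fin_cases i <;> fin_cases j <;> simp [phiMat]

theorem phiMat_zero_one_one_zero_eq_transvection_mul (σ : R) :
    phiMat σ 0 1 1 0 = transvection 1 2 σ * (Equiv.swap 0 3 : Equiv.Perm (Fin 4)).permMatrix R := by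
  ext i j
  fin_cases i <;> fin_cases j <;>
    simp [phiMat, transvection, single_apply, PEquiv.toMatrix_apply, mul_apply, Fin.sum_univ_four,
      Equiv.swap_apply_def]

end

theorem stmt19_general (F K : Type) [Field F] [Field K] [Algebra F K]
    (σ : F) (ξ : K) :
    ((!![0,0,0,1; 0,1,σ,0; 0,0,1,0; 1,0,0,0] : Matrix (Fin 4) (Fin 4) F) = phiMat σ 0 1 1 0 ∧
      (0*0 + 1*1 : F) = 1) ∧
    (∀ a b c d : F, a*d + b*c = 1 →
      (!![1,0,0,0; 0,1,σ,0; 0,0,1,0; 0,0,0,1] : Matrix (Fin 4) (Fin 4) F) * phiMat σ a b c d =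
        phiMat σ a b c d * !![1,0,0,0; 0,1,σ,0; 0,0,1,0; 0,0,0,1]) ∧
    (((!![1,0,0,0; 0,1,σ,0; 0,0,1,0; 0,0,0,1] : Matrix (Fin 4) (Fin 4) F).map
          (algebraMap F K)).mulVec ![ξ, 0, 1, ξ] =
        ((!![0,0,0,1; 0,1,σ,0; 0,0,1,0; 1,0,0,0] : Matrix (Fin 4) (Fin 4) F).map
          (algebraMap F K)).mulVec ![ξ, 0, 1, ξ] ∧
      ((!![1,0,0,0; 0,1,σ,0; 0,0,1,0; 0,0,0,1] : Matrix (Fin 4) (Fin 4) F).map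
          (algebraMap F K)).mulVec ![ξ, 0, 1, ξ] = ![ξ, algebraMap F K σ, 1, ξ]) := by
  have hg := (phiMat_zero_one_one_zero σ).symm
  refine ⟨⟨hg, by ring⟩, fun a b c d _ => ?_, ?_, ?_⟩
  · rw [← transvection_one_two_eq]
    exact commute_transvection (phiMat_row_two σ a b c d) (phiMat_col_one σ a b c d) σ
  · rw [hg, ← transvection_one_two_eq, phiMat_zero_one_one_zero_eq_transvection_mul, Matrix.map_mul,
      ← mulVec_mulVec, map_permMatrix, permMatrix_mulVec]
    congr 1
    ext i; fin_cases i <;> rfl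
  · rw [← transvection_one_two_eq, map_transvection, transvection_mulVec]
    ext i; fin_cases i <;> simp

theorem stmt19 (q : ℕ) (F K : Type) [Field F] [Fintype F] [Field K] [Fintype K] [Algebra F K]
    (hq : Fintype.card F = q) (hchar : ringChar F = 2) (hK : Fintype.card K = q^2)
    (σ : F) (hσ : σ ≠ 0) (ξ : K) (hξ : ξ ∉ Set.range (algebraMap F K)) :
    ((!![0,0,0,1; 0,1,σ,0; 0,0,1,0; 1,0,0,0] : Matrix (Fin 4) (Fin 4) F) = phiMat σ 0 1 1 0 ∧
      (0*0 + 1*1 : F) = 1) ∧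
    (∀ a b c d : F, a*d + b*c = 1 →
      (!![1,0,0,0; 0,1,σ,0; 0,0,1,0; 0,0,0,1] : Matrix (Fin 4) (Fin 4) F) * phiMat σ a b c d =
        phiMat σ a b c d * !![1,0,0,0; 0,1,σ,0; 0,0,1,0; 0,0,0,1]) ∧
    (((!![1,0,0,0; 0,1,σ,0; 0,0,1,0; 0,0,0,1] : Matrix (Fin 4) (Fin 4) F).map
          (algebraMap F K)).mulVec ![ξ, 0, 1, ξ] =
        ((!![0,0,0,1; 0,1,σ,0; 0,0,1,0; 1,0,0,0] : Matrix (Fin 4) (Fin 4) F).map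
          (algebraMap F K)).mulVec ![ξ, 0, 1, ξ] ∧
      ((!![1,0,0,0; 0,1,σ,0; 0,0,1,0; 0,0,0,1] : Matrix (Fin 4) (Fin 4) F).map
          (algebraMap F K)).mulVec ![ξ, 0, 1, ξ] = ![ξ, algebraMap F K σ, 1, ξ]) :=
  stmt19_general F K σ ξ
end
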